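/- (Ore condition for S_N modulo N.) Given morphisms x: A ⟶ X and s: A ⟶ B in C with s ∈ S_N, there exist an object X', a morphism t: X ⟶ X' belonging to S_N, and a morphism x': B ⟶ X' such that the difference t ∘ x − x' ∘ s factors through an object of N. -/

import Mathlib

open CategoryTheory CategoryTheory.Limits CategoryTheory.Pretriangulated

universe v u v₂ u₂

variable {C : Type u} [Category.{v} C] [Preadditive C] [HasZeroObject C]
  [HasShift C ℤ] [∀ n : ℤ, (shiftFunctor C n).Additive] [Pretriangulated C]

/-- `f : X ⟶ Y` factors through an object of `N`. -/
def FactorsThru (N : Set C) {X Y : C} (f : X ⟶ Y) : Prop :=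
  ∃ (Z : C) (_ : Z ∈ N) (u : X ⟶ Z) (v : Z ⟶ Y), f = u ≫ v

/-- The morphism `X⟦-1⟧ ⟶ A` obtained from `h : X ⟶ A⟦1⟧` by shifting by `-1` and
composing with the canonical isomorphism `A⟦1⟧⟦-1⟧ ≅ A`. -/
noncomputable def descShift {X A : C} (h : X ⟶ A⟦(1:ℤ)⟧) : X⟦(-1:ℤ)⟧ ⟶ A :=
  h⟦(-1:ℤ)⟧' ≫ (shiftEquiv C (1:ℤ)).unitIso.inv.app A

/-- The class `S_N` of morphisms fitting in a distinguished triangle whose two other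
maps factor through `N`. -/
def SN (N : Set C) {B C₀ : C} (g : B ⟶ C₀) : Prop :=
  ∃ (A : C) (f : A ⟶ B) (h : C₀ ⟶ A⟦(1:ℤ)⟧),
    (Triangle.mk f g h ∈ distTriang C) ∧ FactorsThru N f ∧ FactorsThru N h

/-- The class `L`. -/
def ClassL (N : Set C) {A B : C} (f : A ⟶ B) : Prop :=
  ∃ (N₀ : C) (_ : N₀ ∈ N) (g : B ⟶ N₀) (h : N₀ ⟶ A⟦(1:ℤ)⟧),
    (Triangle.mk f g h ∈ distTriang C) ∧ FactorsThru N (descShift h)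

/-- The class `R`. -/
def ClassR (N : Set C) {B C₀ : C} (g : B ⟶ C₀) : Prop :=
  ∃ (N₀ : C) (_ : N₀ ∈ N) (f : N₀ ⟶ B) (h : C₀ ⟶ N₀⟦(1:ℤ)⟧),
    (Triangle.mk f g h ∈ distTriang C) ∧ FactorsThru N h

/-- Condition (Lex) on a morphism `h : C₀ ⟶ A⟦1⟧`. -/
def LexCond (N : Set C) {C₀ A : C} (h : C₀ ⟶ A⟦(1:ℤ)⟧) : Prop :=
  ∀ (N₀ : C), N₀ ∈ N → ∀ (x : N₀ ⟶ C₀), FactorsThru N (descShift (x ≫ h))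

/-- Condition (Rex) on a morphism `h : C₀ ⟶ A⟦1⟧`. -/
def RexCond (N : Set C) {C₀ A : C} (h : C₀ ⟶ A⟦(1:ℤ)⟧) : Prop :=
  ∀ (N₀ : C), N₀ ∈ N → ∀ (y : A ⟶ N₀),
    ∃ (M : C) (_ : M ∈ N) (u : C₀⟦(-1:ℤ)⟧ ⟶ M⟦(-1:ℤ)⟧) (v : M⟦(-1:ℤ)⟧ ⟶ N₀),
      descShift h ≫ y = u ≫ v

/-- `S_N` as a morphism property. -/
def SNProp (N : Set C) : MorphismProperty C := fun _ _ g => SN N g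

/-!
Write `s ∈ S_N` through a triangle `A₀ ⟶ A ⟶ B ⟶ A₀⟦1⟧` whose outer maps factor as `f₁ ≫ f₂`
through `N₁ ∈ N` and as `h₁ ≫ h₂` through `N₂ ∈ N`. Completing `h₂ ≫ f₁⟦1⟧ : N₂ ⟶ N₁⟦1⟧` to a
triangle `N₁ ⟶ W ⟶ N₂ ⟶ N₁⟦1⟧` gives `W ∈ N` by closure under extensions, and pushing that
triangle forward along `f₂ ≫ x : N₁ ⟶ X` gives `t : X ⟶ X'` in `S_N` together with `e : W ⟶ X'`
extending `f₂ ≫ x ≫ t`. The composite `f₁ ≫ (N₁ ⟶ W)` is killed by the desuspended connecting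
map of the first triangle, so it equals `f ≫ γ` for some `γ : A ⟶ W`. Then `x ≫ t - γ ≫ e` is
killed by `f`, hence equals `s ≫ x'`, and `x ≫ t - s ≫ x' = γ ≫ e` factors through `W`.
-/

omit [Preadditive C] [HasZeroObject C] [∀ n : ℤ, (shiftFunctor C n).Additive]
  [Pretriangulated C] in
lemma descShift_comp_shiftMap {X A A' : C} (h : X ⟶ A⟦(1:ℤ)⟧) (f : A ⟶ A') :
    descShift (h ≫ f⟦(1:ℤ)⟧') = descShift h ≫ f := by
  simp only [descShift, Functor.map_comp, shiftEquiv'_unitIso, Iso.symm_inv, Category.assoc]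
  congr 1
  exact (shiftFunctorCompIsoId C (1:ℤ) (-1) (by norm_num)).hom.naturality f

omit [HasZeroObject C] [Pretriangulated C] in
lemma descShift_zero {X A : C} : descShift (0 : X ⟶ A⟦(1:ℤ)⟧) = 0 := by
  simp [descShift]

omit [Preadditive C] [HasZeroObject C] [HasShift C ℤ] [∀ n : ℤ, (shiftFunctor C n).Additive]
  [Pretriangulated C] in
lemma factorsThru_comp {N : Set C} {X Y Z : C} (hZ : Z ∈ N) (u : X ⟶ Z) (v : Z ⟶ Y) :
    FactorsThru N (u ≫ v) :=
  ⟨Z, hZ, u, v, rfl⟩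

omit [HasZeroObject C] [HasShift C ℤ] [∀ n : ℤ, (shiftFunctor C n).Additive]
  [Pretriangulated C] in
lemma FactorsThru.neg {N : Set C} {X Y : C} {f : X ⟶ Y} (hf : FactorsThru N f) :
    FactorsThru N (-f) := by
  obtain ⟨Z, hZ, u, v, rfl⟩ := hf
  exact ⟨Z, hZ, -u, v, (Preadditive.neg_comp u v).symm⟩

lemma exists_eq_comp_of_descShift_comp_eq_zero {A B X Y : C} {f : A ⟶ B} {g : B ⟶ X}
    {h : X ⟶ A⟦(1:ℤ)⟧} (hT : Triangle.mk f g h ∈ distTriang C) (φ : A ⟶ Y)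
    (hφ : descShift h ≫ φ = 0) : ∃ γ : B ⟶ Y, φ = f ≫ γ :=
  Triangle.yoneda_exact₂ _ (inv_rot_of_distTriang _ hT) φ <| by
    change (-descShift h) ≫ φ = 0
    rw [Preadditive.neg_comp, hφ, neg_zero]

lemma sn_mor₁_of_distTriang {N : Set C} {X Y Z : C} {t : X ⟶ Y} {c : Y ⟶ Z} {h : Z ⟶ X⟦(1:ℤ)⟧}
    (hT : Triangle.mk t c h ∈ distTriang C) (hZ : Z ∈ N) (hh : FactorsThru N (descShift h)) :
    SN N t :=
  ⟨_, _, _, inv_rot_of_distTriang _ hT, hh.neg, factorsThru_comp hZ _ _⟩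

lemma exists_sn_comp_eq_comp {N : Set C} {N₁ N₂ W X : C} {i : N₁ ⟶ W} {p : W ⟶ N₂}
    {ψ : N₂ ⟶ N₁⟦(1:ℤ)⟧} (hU : Triangle.mk i p ψ ∈ distTriang C) (hN₁ : N₁ ∈ N) (hN₂ : N₂ ∈ N)
    (g : N₁ ⟶ X) : ∃ (X' : C) (t : X ⟶ X') (e : W ⟶ X'), SN N t ∧ i ≫ e = g ≫ t := by
  obtain ⟨X', t, c, hT⟩ := distinguished_cocone_triangle₂ (ψ ≫ g⟦(1:ℤ)⟧')
  obtain ⟨e, hie, -⟩ := complete_distinguished_triangle_morphism₂ _ _ hU hT g (𝟙 N₂)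
    (Category.id_comp _).symm
  refine ⟨X', t, e, sn_mor₁_of_distTriang hT hN₂ ?_, hie⟩
  rw [descShift_comp_shiftMap]
  exact factorsThru_comp hN₁ _ _

theorem stmt7 (N : Set C)
    (hNext : ∀ (T : Triangle C), (T ∈ distTriang C) → T.obj₁ ∈ N → T.obj₃ ∈ N → T.obj₂ ∈ N)
    {A B X : C} (x : A ⟶ X) (s : A ⟶ B) (hs : SN N s) :
    ∃ (X' : C) (t : X ⟶ X') (x' : B ⟶ X'),
      SN N t ∧ FactorsThru N (x ≫ t - s ≫ x') := by
  obtain ⟨A₀, f, h, hT, ⟨N₁, hN₁, f₁, f₂, rfl⟩, ⟨N₂, hN₂, h₁, h₂, rfl⟩⟩ := hs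
  obtain ⟨W, i, p, hU⟩ := distinguished_cocone_triangle₂ (h₂ ≫ f₁⟦(1:ℤ)⟧')
  obtain ⟨X', t, e, ht, hie⟩ := exists_sn_comp_eq_comp hU hN₁ hN₂ (f₂ ≫ x)
  have hU₀ : (h₂ ≫ f₁⟦(1:ℤ)⟧') ≫ i⟦(1:ℤ)⟧' = 0 := comp_distTriang_mor_zero₃₁ _ hU
  obtain ⟨γ, hγ⟩ := exists_eq_comp_of_descShift_comp_eq_zero hT (f₁ ≫ i) <| by
    rw [← descShift_comp_shiftMap, Functor.map_comp, Category.assoc, ← Category.assoc h₂, hU₀,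
      comp_zero, descShift_zero]
  obtain ⟨x', hx'⟩ := Triangle.yoneda_exact₂ _ hT (x ≫ t - γ ≫ e) <| by
    change (f₁ ≫ f₂) ≫ (x ≫ t - γ ≫ e) = 0
    rw [Preadditive.comp_sub, ← Category.assoc _ γ, ← hγ, Category.assoc f₁ i, hie, sub_eq_zero]
    simp only [Category.assoc]
  refine ⟨X', t, x', ht, W, hNext _ hU hN₁ hN₂, γ, e, ?_⟩
  rw [show s ≫ x' = x ≫ t - γ ≫ e from hx'.symm, sub_sub_cancel]
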